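/- Fix an integer d ≥ 2. With respect to the graded reverse lexicographic order > with a_1 > ⋯ > a_d > b_1 > ⋯ > b_d, the initial ideal in(I_{K_{2,d}}) of the toric ideal I_{K_{2,d}} is the monomial ideal generated by F_d = {a_i b_j : 1 ≤ j < i ≤ d}. -/
import Mathlib


open MvPolynomial

/-- The vertices of the complete bipartite graph `K_{2,d}`: `x₁, x₂` and the
`y`-vertices `y_1, …, y_d` (`VertK.y i` is `y_{i+1}`). -/
inductive VertK (d : ℕ) : Type where
  | x1 : VertK d
  | x2 : VertK d
  | y : Fin d → VertK d
deriving DecidableEq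

/-- The edge variables of `K_{2,d}`: `a_1, …, a_d` and `b_1, …, b_d`
(0-indexed: `EVarK.a i` is `a_{i+1}`, etc.), where `a_i = {x₁,y_i}` and
`b_i = {x₂,y_i}`. -/
inductive EVarK (d : ℕ) : Type where
  | a : Fin d → EVarK d
  | b : Fin d → EVarK d
deriving DecidableEq

/-- The image of each edge variable of `K_{2,d}` under `φ_G`: the product of the
variables of the two endpoints of the corresponding edge. -/
noncomputable def edgeImageK (k : Type) [Field k] (d : ℕ) :
    EVarK d → MvPolynomial (VertK d) k
  | .a i => X VertK.x1 * X (VertK.y i)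
  | .b i => X VertK.x2 * X (VertK.y i)

/-- The toric ideal `I_{K_{2,d}}` of the complete bipartite graph `K_{2,d}`, viewed
in the polynomial ring `k[a_1,…,a_d,b_1,…,b_d]`: the kernel of the `k`-algebra map
sending each edge variable to the product of its endpoint variables. -/
noncomputable def toricIdealK (k : Type) [Field k] (d : ℕ) :
    Ideal (MvPolynomial (EVarK d) k) :=
  RingHom.ker (MvPolynomial.aeval (edgeImageK k d)).toRingHom

open MvPolynomial

/-- Total degree of an exponent vector. -/
def expDeg {σ : Type} (μ : σ →₀ ℕ) : ℕ := μ.sum fun _ n => n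

/-- The graded reverse lexicographic order on exponent vectors, determined by a
rank function `rk` on the variables (`rk x < rk y` means `x > y` as variables).
`grevlexLT rk μ ν` holds iff `μ < ν` in grevlex: either `μ` has smaller total
degree, or the degrees agree and at the smallest variable (largest rank) where the
exponents differ, `μ` has the *larger* exponent. -/
def grevlexLT {σ : Type} (rk : σ → ℕ) (μ ν : σ →₀ ℕ) : Prop :=
  expDeg μ < expDeg ν ∨
    (expDeg μ = expDeg ν ∧ ∃ x, ν x < μ x ∧ ∀ y, rk x < rk y → μ y = ν y)

/-- The initial ideal of `I` with respect to the monomial order `grevlexLT rk`: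
the ideal generated by the leading monomials of the nonzero elements of `I`. -/
noncomputable def initialIdeal {σ k : Type} [Field k] (rk : σ → ℕ)
    (I : Ideal (MvPolynomial σ k)) : Ideal (MvPolynomial σ k) :=
  Ideal.span {p | ∃ f ∈ I, f ≠ 0 ∧ ∃ μ ∈ f.support,
    (∀ ν ∈ f.support, ν ≠ μ → grevlexLT rk ν μ) ∧ p = (monomial μ (1 : k))}

/-- The rank function realizing the variable order `a_1 > ⋯ > a_d > b_1 > ⋯ > b_d`
(smaller rank = larger variable). -/
def rankK (d : ℕ) : EVarK d → ℕ
  | .a i => i.val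
  | .b i => d + i.val

section Aux

variable {k : Type} [Field k] {d : ℕ}

/-- The equivalence between `Fin d ⊕ Fin d` and `EVarK d`. -/
def evarEquiv (d : ℕ) : (Fin d ⊕ Fin d) ≃ EVarK d where
  toFun := Sum.elim EVarK.a EVarK.b
  invFun := fun e => match e with | .a i => .inl i | .b i => .inr i
  left_inv := by rintro (i | i) <;> rfl
  right_inv := by rintro (i | i) <;> rfl

instance : Fintype (EVarK d) := Fintype.ofEquiv _ (evarEquiv d)

lemma sum_evark {M : Type*} [AddCommMonoid M] (F : EVarK d → M) :
    ∑ e : EVarK d, F e = (∑ i : Fin d, F (.a i)) + ∑ i : Fin d, F (.b i) := by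
  rw [← Equiv.sum_comp (evarEquiv d) F, Fintype.sum_sum_type]
  rfl

/-- Exponent vector of the image of an edge variable. -/
noncomputable def Evert (d : ℕ) : EVarK d → (VertK d →₀ ℕ)
  | .a i => Finsupp.single VertK.x1 1 + Finsupp.single (VertK.y i) 1
  | .b i => Finsupp.single VertK.x2 1 + Finsupp.single (VertK.y i) 1

/-- Image of an exponent vector under the monomial map. -/
noncomputable def phiExp (μ : EVarK d →₀ ℕ) : VertK d →₀ ℕ :=
  μ.sum fun e n => n • Evert d e

lemma phiExp_apply (μ : EVarK d →₀ ℕ) (v : VertK d) :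
    phiExp μ v = ∑ e : EVarK d, μ e * Evert d e v := by
  classical
  rw [phiExp, Finsupp.sum_fintype _ _ (by intro i; simp)]
  simp [Finsupp.smul_apply]

lemma phiExp_x1 (μ : EVarK d →₀ ℕ) :
    phiExp μ VertK.x1 = ∑ i : Fin d, μ (.a i) := by
  rw [phiExp_apply, sum_evark]
  simp [Evert, Finsupp.single_apply]

lemma phiExp_x2 (μ : EVarK d →₀ ℕ) :
    phiExp μ VertK.x2 = ∑ i : Fin d, μ (.b i) := by
  rw [phiExp_apply, sum_evark]
  simp [Evert, Finsupp.single_apply]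

lemma phiExp_y (μ : EVarK d →₀ ℕ) (i : Fin d) :
    phiExp μ (VertK.y i) = μ (.a i) + μ (.b i) := by
  rw [phiExp_apply, sum_evark]
  simp [Evert, Finsupp.single_apply]

lemma expDeg_eq (μ : EVarK d →₀ ℕ) :
    expDeg μ = (∑ i : Fin d, μ (.a i)) + ∑ i : Fin d, μ (.b i) := by
  classical
  rw [expDeg, Finsupp.sum_fintype _ _ (by intro i; rfl), sum_evark]

lemma edgeImage_eq (e : EVarK d) : edgeImageK k d e = monomial (Evert d e) 1 := by
  cases e <;>
    simp only [edgeImageK, Evert, MvPolynomial.X, monomial_mul, one_mul]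

lemma prod_monomial {α : Type*} (t : Finset α) (g : α → (VertK d →₀ ℕ)) :
    (∏ x ∈ t, (monomial (g x) (1 : k))) = monomial (∑ x ∈ t, g x) 1 := by
  classical
  induction t using Finset.cons_induction with
  | empty => simp [monomial_zero']
  | cons a t ha ih => rw [Finset.prod_cons, Finset.sum_cons, ih, monomial_mul, one_mul]

lemma aeval_monomial_eq (μ : EVarK d →₀ ℕ) (c : k) :
    aeval (edgeImageK k d) (monomial μ c) = monomial (phiExp μ) c := by
  rw [aeval_monomial, Finsupp.prod]
  simp_rw [edgeImage_eq, monomial_pow, one_pow]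
  rw [prod_monomial, phiExp, Finsupp.sum, algebraMap_eq, C_mul_monomial, mul_one]

lemma coeff_aeval (f : MvPolynomial (EVarK d) k) (m : VertK d →₀ ℕ) :
    coeff m (aeval (edgeImageK k d) f)
      = ∑ ν ∈ f.support, if phiExp ν = m then coeff ν f else 0 := by
  classical
  conv_lhs => rw [f.as_sum]
  rw [map_sum, coeff_sum]
  simp_rw [aeval_monomial_eq, coeff_monomial]

lemma exists_partner {f : MvPolynomial (EVarK d) k} (hf : f ∈ toricIdealK k d)
    {μ : EVarK d →₀ ℕ} (hμ : μ ∈ f.support) :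
    ∃ ν ∈ f.support, ν ≠ μ ∧ phiExp ν = phiExp μ := by
  classical
  by_contra h
  push_neg at h
  have hker : aeval (edgeImageK k d) f = 0 := hf
  have h0 : coeff (phiExp μ) (aeval (edgeImageK k d) f) = 0 := by
    rw [hker]; simp
  rw [coeff_aeval, Finset.sum_eq_single_of_mem μ hμ
    (fun ν hν hne => if_neg (h ν hν hne)), if_pos rfl] at h0
  exact (mem_support_iff.mp hμ) h0

lemma rankK_inj : Function.Injective (rankK d) := by
  rintro (i | i) (j | j) h <;> simp only [rankK] at h
  · exact congrArg EVarK.a (Fin.ext h)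
  · exact absurd h (by omega)
  · exact absurd h (by omega)
  · exact congrArg EVarK.b (Fin.ext (by omega))

lemma grevlex_asymm {μ ν : EVarK d →₀ ℕ} (h1 : grevlexLT (rankK d) μ ν)
    (h2 : grevlexLT (rankK d) ν μ) : False := by
  rcases h1 with h1 | ⟨hd1, x, hx, hx'⟩
  · rcases h2 with h2 | ⟨hd2, _⟩
    · omega
    · omega
  · rcases h2 with h2 | ⟨hd2, x', hx2, hx2'⟩
    · omega
    · rcases lt_trichotomy (rankK d x) (rankK d x') with h | h | h
      · exact absurd (hx' x' h) (by omega)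
      · have : x = x' := rankK_inj h
        subst this; omega
      · exact absurd (hx2' x h) (by omega)

/-- The key combinatorial fact: if `μ` is a standard monomial and `ν ≠ μ` has the
same image under `φ`, then `μ < ν` in grevlex. -/
lemma grevlex_lt_of_phiExp_eq {μ ν : EVarK d →₀ ℕ}
    (hstd : ∀ i j : Fin d, j < i → μ (.a i) = 0 ∨ μ (.b j) = 0)
    (hφ : phiExp ν = phiExp μ) (hne : ν ≠ μ) :
    grevlexLT (rankK d) μ ν := by
  classical
  have hy : ∀ i : Fin d, ν (.a i) + ν (.b i) = μ (.a i) + μ (.b i) := by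
    intro i
    have := DFunLike.congr_fun hφ (VertK.y i)
    simpa [phiExp_y] using this
  have hx1 : (∑ i : Fin d, ν (.a i)) = ∑ i : Fin d, μ (.a i) := by
    have := DFunLike.congr_fun hφ VertK.x1
    simpa [phiExp_x1] using this
  have hdeg : expDeg μ = expDeg ν := by
    rw [expDeg_eq, expDeg_eq, ← hx1]
    have : (∑ i : Fin d, ν (.b i)) = ∑ i : Fin d, μ (.b i) := by
      have h1 : (∑ i : Fin d, (ν (.a i) + ν (.b i)))
          = ∑ i : Fin d, (μ (.a i) + μ (.b i)) := by
        exact Finset.sum_congr rfl fun i _ => hy i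
      rw [Finset.sum_add_distrib, Finset.sum_add_distrib, hx1] at h1
      omega
    omega
  -- the set of indices where the `a`-coordinates differ
  set S : Finset (Fin d) := Finset.univ.filter (fun i => μ (.a i) ≠ ν (.a i)) with hS
  have hSne : S.Nonempty := by
    by_contra hempty
    rw [Finset.not_nonempty_iff_eq_empty] at hempty
    apply hne
    ext e
    have ha : ∀ i : Fin d, μ (.a i) = ν (.a i) := by
      intro i
      by_contra hcon
      have : i ∈ S := by simp [hS, hcon]
      simp [hempty] at this
    cases e with
    | a i => exact (ha i).symm
    | b i => have := hy i; have := ha i; omega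
  obtain ⟨istar, histar, hmax⟩ := S.exists_max_image id hSne
  have hdiff : μ (.a istar) ≠ ν (.a istar) := by
    simpa [hS] using histar
  have hagree : ∀ m : Fin d, istar < m → μ (.a m) = ν (.a m) := by
    intro m hm
    by_contra hcon
    have : m ∈ S := by simp [hS, hcon]
    exact absurd (hmax m this) (by simpa using hm.not_ge)
  have hlt : μ (.a istar) < ν (.a istar) := by
    by_contra hge
    have hgt : ν (.a istar) < μ (.a istar) := by omega
    -- find j < istar with ν (.a j) > μ (.a j)
    have hj : ∃ j : Fin d, j < istar ∧ μ (.a j) < ν (.a j) := by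
      by_contra hcon
      push_neg at hcon
      have hle : ∀ i : Fin d, ν (.a i) ≤ μ (.a i) := by
        intro i
        rcases lt_trichotomy i istar with h | h | h
        · exact hcon i h
        · subst h; omega
        · exact (hagree i h).ge
      have : (∑ i : Fin d, ν (.a i)) < ∑ i : Fin d, μ (.a i) :=
        Finset.sum_lt_sum (fun i _ => hle i) ⟨istar, Finset.mem_univ _, hgt⟩
      omega
    obtain ⟨j, hjlt, hjgt⟩ := hj
    have hbj : 0 < μ (.b j) := by have := hy j; omega
    rcases hstd istar j hjlt with h | h
    · omega
    · omega
  -- now μ (.b istar) > ν (.b istar)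
  have hb : ν (.b istar) < μ (.b istar) := by have := hy istar; omega
  refine Or.inr ⟨hdeg, EVarK.b istar, hb, ?_⟩
  rintro (m | m) hrk <;> simp only [rankK] at hrk
  · exact absurd hrk (by have := m.isLt; omega)
  · have hm : istar < m := by
      have : istar.val < m.val := by omega
      exact this
    have := hagree m hm
    have := hy m
    omega

/-- The standard computation: `X s * X t` as a monomial. -/
lemma X_mul_X (s t : EVarK d) :
    (X s * X t : MvPolynomial (EVarK d) k)
      = monomial (Finsupp.single s 1 + Finsupp.single t 1) 1 := by
  simp only [MvPolynomial.X, monomial_mul, one_mul]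

lemma expDeg_add (μ ν : EVarK d →₀ ℕ) : expDeg (μ + ν) = expDeg μ + expDeg ν :=
  Finsupp.sum_add_index' (fun _ => rfl) (fun _ _ _ => rfl)

lemma expDeg_single (x : EVarK d) (n : ℕ) : expDeg (Finsupp.single x n) = n :=
  Finsupp.sum_single_index rfl

end Aux

/-- For `d ≥ 2`, with respect to the graded reverse lexicographic
order with `a_1 > ⋯ > a_d > b_1 > ⋯ > b_d`, the initial ideal of the toric ideal
`I_{K_{2,d}}` is the monomial ideal generated by `F_d = {a_i b_j : 1 ≤ j < i ≤ d}`. -/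
theorem initial_ideal_K2d (k : Type) [Field k] (d : ℕ) (hd : 2 ≤ d) :
    initialIdeal (rankK d) (toricIdealK k d) =
      Ideal.span {p | ∃ i j : Fin d, j < i ∧ p = X (EVarK.a i) * X (EVarK.b j)} := by
  classical
  apply le_antisymm
  · -- initial ideal ⊆ span of the a_i b_j
    rw [initialIdeal, Ideal.span_le]
    rintro p ⟨f, hf, hf0, μ, hμ, hmaxlead, rfl⟩
    have hnotstd : ¬ (∀ i j : Fin d, j < i → μ (.a i) = 0 ∨ μ (.b j) = 0) := by
      intro hstd
      obtain ⟨ν, hν, hne, hφ⟩ := exists_partner hf hμ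
      exact grevlex_asymm (grevlex_lt_of_phiExp_eq hstd hφ hne) (hmaxlead ν hν hne)
    push_neg at hnotstd
    obtain ⟨i, j, hji, hai, hbj⟩ := hnotstd
    set g : EVarK d →₀ ℕ := Finsupp.single (EVarK.a i) 1 + Finsupp.single (EVarK.b j) 1
      with hg
    have hab : (EVarK.a i : EVarK d) ≠ EVarK.b j := by simp
    have hgle : g ≤ μ := by
      intro s
      by_cases hsa : s = EVarK.a i
      · subst hsa
        have : g (EVarK.a i) = 1 := by
          simp [hg, Finsupp.single_apply, hab]
        rw [this]; omega
      · by_cases hsb : s = EVarK.b j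
        · subst hsb
          have : g (EVarK.b j) = 1 := by
            simp [hg, Finsupp.single_apply, Ne.symm hab]
          rw [this]; omega
        · have : g s = 0 := by
            simp [hg, Finsupp.single_apply, Ne.symm hsa, Ne.symm hsb]
          rw [this]; omega
    have key : (monomial μ (1 : k))
        = monomial (μ - g) 1 * (X (EVarK.a i) * X (EVarK.b j)) := by
      rw [X_mul_X, ← hg, monomial_mul, one_mul, tsub_add_cancel_of_le hgle]
    rw [key]
    exact Ideal.mul_mem_left _ _ (Ideal.subset_span ⟨i, j, hji, rfl⟩)
  · -- span of a_i b_j ⊆ initial ideal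
    rw [Ideal.span_le]
    rintro p ⟨i, j, hji, rfl⟩
    apply Ideal.subset_span
    set μ : EVarK d →₀ ℕ := Finsupp.single (EVarK.a i) 1 + Finsupp.single (EVarK.b j) 1
      with hμdef
    set ν : EVarK d →₀ ℕ := Finsupp.single (EVarK.a j) 1 + Finsupp.single (EVarK.b i) 1
      with hνdef
    have hij : i ≠ j := hji.ne'
    have hμa : μ (EVarK.a i) = 1 := by simp [hμdef, Finsupp.single_apply]
    have hνa : ν (EVarK.a i) = 0 := by
      simp [hνdef, Finsupp.single_apply, Ne.symm hij]
    have hμν : μ ≠ ν := fun h => by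
      rw [h, hνa] at hμa; exact one_ne_zero hμa.symm
    refine ⟨monomial μ 1 - monomial ν 1, ?_, ?_, μ, ?_, ?_, ?_⟩
    · -- in the toric ideal
      show aeval (edgeImageK k d) _ = 0
      rw [map_sub, aeval_monomial_eq, aeval_monomial_eq]
      have : phiExp μ = phiExp ν := by
        rw [hμdef, hνdef, phiExp, phiExp]
        rw [Finsupp.sum_add_index' (by simp) (by intro e m n; rw [add_smul]),
           Finsupp.sum_add_index' (by simp) (by intro e m n; rw [add_smul])]
        rw [Finsupp.sum_single_index (by simp), Finsupp.sum_single_index (by simp),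
           Finsupp.sum_single_index (by simp), Finsupp.sum_single_index (by simp)]
        simp only [one_smul, Evert]
        abel
      rw [this, sub_self]
    · -- nonzero
      intro h
      have : coeff μ (monomial μ (1:k) - monomial ν 1) = 0 := by rw [h]; simp
      rw [coeff_sub, coeff_monomial, coeff_monomial, if_pos rfl,
        if_neg (Ne.symm hμν)] at this
      simp at this
    · -- μ is in the support
      rw [mem_support_iff, coeff_sub, coeff_monomial, coeff_monomial, if_pos rfl,
        if_neg (Ne.symm hμν)]
      simp
    · -- μ is the leading monomial
      intro τ hτ hτμ
      have hτν : τ = ν := by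
        rw [mem_support_iff, coeff_sub, coeff_monomial, coeff_monomial,
          if_neg (fun h => hτμ h.symm)] at hτ
        by_contra hcon
        rw [if_neg (fun h => hcon h.symm)] at hτ
        simp at hτ
      subst hτν
      -- show grevlexLT (rankK d) ν μ
      have hdeg : expDeg ν = expDeg μ := by
        rw [hμdef, hνdef, expDeg_add, expDeg_add, expDeg_single, expDeg_single,
          expDeg_single, expDeg_single]
      have hμb : μ (EVarK.b i) = 0 := by
        simp [hμdef, Finsupp.single_apply, hji.ne]
      have hνb : ν (EVarK.b i) = 1 := by
        simp [hνdef, Finsupp.single_apply]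
      refine Or.inr ⟨hdeg, EVarK.b i, by omega, ?_⟩
      rintro (m | m) hrk <;> simp only [rankK] at hrk
      · exact absurd hrk (by have := m.isLt; omega)
      · have him : i < m := by
          have : i.val < m.val := by omega
          exact this
        have h1 : ν (EVarK.b m) = 0 := by
          simp [hνdef, Finsupp.single_apply, him.ne]
        have h2 : μ (EVarK.b m) = 0 := by
          simp [hμdef, Finsupp.single_apply, (hji.trans him).ne]
        rw [h1, h2]
    · -- the generator is the monomial
      rw [X_mul_X]
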